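/- Let ρ > 0, let h: ℝ → ℝ be a nonnegative 2π-periodic ρ-trigonometrically convex function of class C², and let g: ℝ⁺ → ℝ⁺ be a convex function with g(0) = 0 of class C² on (0,∞). Then, in polar coordinates z = re^{iθ}, the Laplacian of the function v(re^{iθ}) := g((1−r)/r)·h(θ) satisfies Δv = (g''(1/r − 1)/r⁴ + g'(1/r − 1)/r³)·h(θ) + (1/r²)·g(1/r − 1)·h''(θ), and consequently Δv ≥ (1/r²)·(1/(1−r) − ρ²)·g((1−r)/r)·h(θ) for all r ∈ (0,1) and θ ∈ ℝ; in particular v is subharmonic on the annulus {z : max{1/2, 1 − 1/ρ²} < |z| < 1}. -/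

import Mathlib

open MeasureTheory Filter Set

noncomputable section

/-- A function `h : ℝ → ℝ` is `ρ`-trigonometrically convex: for `ρ = 0` this means `h` is
constant; for `ρ ≠ 0` it means that
`h θ ≤ (sin (ρ(θ₂-θ)) h θ₁ + sin (ρ(θ-θ₁)) h θ₂) / sin (ρ(θ₂-θ₁))`
for all `θ ∈ (θ₁, θ₂)` whenever `0 < θ₂ - θ₁ < π/ρ`. -/
def TrigConvex (ρ : ℝ) (h : ℝ → ℝ) : Prop :=
  (ρ = 0 → ∃ c : ℝ, ∀ θ, h θ = c) ∧
  (ρ ≠ 0 → ∀ θ₁ θ₂ θ : ℝ, 0 < θ₂ - θ₁ → θ₂ - θ₁ < Real.pi / ρ → θ₁ < θ → θ < θ₂ →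
    h θ ≤ (Real.sin (ρ * (θ₂ - θ)) * h θ₁ + Real.sin (ρ * (θ - θ₁)) * h θ₂) /
      Real.sin (ρ * (θ₂ - θ₁)))

/-- `u` is subharmonic on the set `U ⊆ ℂ`: `u` is upper semicontinuous on `U` and satisfies
the sub-mean-value inequality on every circle whose closed disk lies in `U`.
(Functions here are real-valued; the paper's value `-∞` is not modelled.) -/
def SubharmonicOn (u : ℂ → ℝ) (U : Set ℂ) : Prop :=
  UpperSemicontinuousOn u U ∧
  ∀ z ∈ U, ∀ r : ℝ, 0 < r → Metric.closedBall z r ⊆ U →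
    u z ≤ (2 * Real.pi)⁻¹ * ∫ θ in (0:ℝ)..(2 * Real.pi), u (circleMap z r θ)

/-- The Laplacian of a (smooth) function `φ : ℂ → ℝ`, as the sum of the second directional
derivatives in the directions `1` and `I`. -/
def lap (φ : ℂ → ℝ) (z : ℂ) : ℝ :=
  fderiv ℝ (fun w => fderiv ℝ φ w 1) z 1 +
    fderiv ℝ (fun w => fderiv ℝ φ w Complex.I) z Complex.I

/-- The pair of positive measures `(μp, μn)` represents the Riesz charge
`μ_M = (1/(2π)) Δ M = μp - μn` of `M` on the open set `U`, in the distributional sense: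
`∫ M Δφ dA = 2π (∫ φ dμp - ∫ φ dμn)` for every smooth `φ` compactly supported in `U`. -/
def IsRieszChargeOn (M : ℂ → ℝ) (U : Set ℂ) (μp μn : MeasureTheory.Measure ℂ) : Prop :=
  ∀ φ : ℂ → ℝ, ContDiff ℝ (⊤ : ℕ∞) φ → HasCompactSupport φ → tsupport φ ⊆ U →
    ∫ z, M z * lap φ z = 2 * Real.pi * ((∫ z, φ z ∂μp) - ∫ z, φ z ∂μn)

/-- `μ` is the Riesz measure `(1/(2π)) Δ u` of `u` on `U`. -/
def IsRieszMeasureOn (u : ℂ → ℝ) (U : Set ℂ) (μ : MeasureTheory.Measure ℂ) : Prop :=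
  IsRieszChargeOn u U μ 0

/-- `M` is δ-subharmonic on `U`: a difference of two subharmonic functions on `U`. -/
def DeltaSubharmonicOn (M : ℂ → ℝ) (U : Set ℂ) : Prop :=
  ∃ M₁ M₂ : ℂ → ℝ, SubharmonicOn M₁ U ∧ SubharmonicOn M₂ U ∧ ∀ z ∈ U, M z = M₁ z - M₂ z

/-- For a positive measure `μ` on `ℂ` and a weight `h ≥ 0`, the measure on `ℝ` whose
distribution function is the radial counting function `r ↦ μ^rad(r; h) = ∫_{|z| ≤ r} h(arg z) dμ`;
it is the pushforward under `z ↦ |z|` of the measure `h (arg z) dμ(z)`.  Integration against it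
is the Stieltjes integral `∫ … dμ^rad(·; h)`. -/
def radMeasure (μ : MeasureTheory.Measure ℂ) (h : ℝ → ℝ) : MeasureTheory.Measure ℝ :=
  MeasureTheory.Measure.map (fun z : ℂ => ‖z‖)
    (μ.withDensity fun z => ENNReal.ofReal (h (Complex.arg z)))

/-- The sequence `Z` has no limit points in `U`: every compact subset of `U` contains only
finitely many terms of `Z`. -/
def NoLimitPointsIn (Z : ℕ → ℂ) (U : Set ℂ) : Prop :=
  ∀ K : Set ℂ, IsCompact K → K ⊆ U → {k : ℕ | Z k ∈ K}.Finite

/-- `f` vanishes on the sequence `Z` in `U`, counting multiplicities: at every `z ∈ U` the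
number of indices `k` with `Z k = z` is at most the order of vanishing of `f` at `z`. -/
def VanishesOn (f : ℂ → ℂ) (Z : ℕ → ℂ) (U : Set ℂ) : Prop :=
  ∀ z ∈ U, ∃ g : ℂ → ℂ, AnalyticAt ℂ g z ∧
    ∀ᶠ w in nhds z, f w = (w - z) ^ (Nat.card {k : ℕ // Z k = z}) * g w

/-!
Along the rays and circles of polar coordinates, the chain rule turns the Cartesian
Laplacian into `∂²v/∂r² + (1/r)∂v/∂r + (1/r²)∂²v/∂θ²`, and for `v = g((1-r)/r) h(θ)` this is
an explicit expression in `g, g', g'', h, h''`. Convexity of `g` with `g 0 = 0` gives `g'' ≥ 0`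
and `g(x) ≤ x g'(x)`, while `ρ`-trigonometric convexity of `h` gives `h'' + ρ² h ≥ 0` (the
symmetric second difference of `h` dominates that of `h(θ) cos(ρ(·-θ))`); together they yield
the lower bound, which is nonnegative on the annulus. A `C²` function with nonnegative
Laplacian is subharmonic: the circle mean `A(r)` satisfies `(r A'(r))' = r ∫ Δu ≥ 0`, because
the angular second derivative integrates to zero over a period, so `A` increases from
`A(0) = 2π u(c)`.
-/

open Complex Metric
open scoped Topology

theorem IsLocalMin.deriv_deriv_nonneg {f : ℝ → ℝ} {x : ℝ} (hmin : IsLocalMin f x)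
    (hc : ContinuousAt f x) : 0 ≤ deriv (deriv f) x := by
  by_contra! hneg
  have hsign := eventually_nhdsWithin_sign_eq_of_deriv_neg hneg hmin.deriv_eq_zero
  obtain ⟨δ, hδ, hball⟩ := Metric.eventually_nhds_iff.mp (hsign.and hmin)
  have hmem : ∀ y ∈ Ioo x (x + δ), y ∈ ball x δ := fun y hy => by
    rw [mem_ball, Real.dist_eq, abs_of_pos (by linarith [hy.1])]; linarith [hy.2]
  have hderiv_neg : ∀ y ∈ Ioo x (x + δ), deriv f y < 0 := fun y hy => by
    have := (hball (hmem y hy)).1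
    rwa [sign_neg (sub_neg.mpr hy.1), sign_eq_neg_one_iff] at this
  have hanti : StrictAntiOn f (Ico x (x + δ)) := by
    refine strictAntiOn_of_deriv_neg (convex_Ico _ _) (fun y hy => ?_) (by simpa using hderiv_neg)
    rcases hy.1.eq_or_lt with rfl | hxy
    · exact hc.continuousWithinAt
    · exact (differentiableAt_of_deriv_ne_zero
        (hderiv_neg y ⟨hxy, hy.2⟩).ne).continuousAt.continuousWithinAt
  have hy : x + δ / 2 ∈ Ioo x (x + δ) := ⟨by linarith, by linarith⟩
  exact (hanti ⟨le_rfl, by linarith⟩ (Ioo_subset_Ico_self hy) hy.1).not_ge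
    (hball (hmem _ hy)).2

theorem TrigConvex.two_mul_cos_mul_le {ρ : ℝ} {h : ℝ → ℝ} (htc : TrigConvex ρ h) (hρ : 0 < ρ)
    {ε : ℝ} (hε : 0 < ε) (hερ : ε < Real.pi / (2 * ρ)) (θ : ℝ) :
    2 * Real.cos (ρ * ε) * h θ ≤ h (θ + ε) + h (θ - ε) := by
  have hρε : ρ * ε < Real.pi / 2 := by
    rw [lt_div_iff₀ (by positivity)] at hερ; linarith
  have hsin : 0 < Real.sin (ρ * ε) :=
    Real.sin_pos_of_pos_of_lt_pi (by positivity) (by linarith [Real.pi_pos])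
  have hcos : 0 < Real.cos (ρ * ε) :=
    Real.cos_pos_of_mem_Ioo ⟨by linarith [Real.pi_pos, mul_pos hρ hε], hρε⟩
  have H := htc.2 hρ.ne' (θ - ε) (θ + ε) θ (by linarith)
    (by rw [lt_div_iff₀ hρ]; linarith) (by linarith) (by linarith)
  rw [show θ + ε - θ = ε by ring, show θ - (θ - ε) = ε by ring,
    show ρ * (θ + ε - (θ - ε)) = 2 * (ρ * ε) by ring, Real.sin_two_mul,
    le_div_iff₀ (by positivity)] at H
  nlinarith

theorem TrigConvex.deriv_deriv_add_sq_mul_nonneg {ρ : ℝ} {h : ℝ → ℝ} (htc : TrigConvex ρ h)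
    (hρ : 0 < ρ) (hC2 : ContDiff ℝ 2 h) (θ : ℝ) :
    0 ≤ deriv (deriv h) θ + ρ ^ 2 * h θ := by
  set φ : ℝ → ℝ := fun ε => h (θ + ε) + h (θ - ε) - 2 * Real.cos (ρ * ε) * h θ
  have hh : Differentiable ℝ h := hC2.differentiable two_ne_zero
  have hh' : Differentiable ℝ (deriv h) :=
    ((contDiff_succ_iff_deriv (n := 1)).mp hC2).2.2.differentiable one_ne_zero
  have hφ' : deriv φ = fun ε => deriv h (θ + ε) - deriv h (θ - ε) +
      2 * ρ * Real.sin (ρ * ε) * h θ := by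
    funext ε
    have hcos := ((Real.hasDerivAt_cos (ρ * ε)).comp ε ((hasDerivAt_id ε).const_mul ρ))
    refine ((HasDerivAt.comp_const_add θ ε (hh _).hasDerivAt).add
      (HasDerivAt.comp_const_sub θ ε (hh _).hasDerivAt)
      |>.sub ((hcos.const_mul 2).mul_const (h θ))).deriv.trans ?_
    simp; ring
  have hφ'' : HasDerivAt (deriv φ) (2 * (deriv (deriv h) θ + ρ ^ 2 * h θ)) 0 := by
    rw [hφ']
    have hsin := (Real.hasDerivAt_sin (ρ * 0)).comp 0 ((hasDerivAt_id (0 : ℝ)).const_mul ρ)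
    refine (((HasDerivAt.comp_const_add θ 0 (hh' _).hasDerivAt).sub
      (HasDerivAt.comp_const_sub θ 0 (hh' _).hasDerivAt)).add
      ((hsin.const_mul (2 * ρ)).mul_const (h θ))).congr_deriv ?_
    rw [add_zero, sub_zero, mul_zero, Real.cos_zero]; ring
  have hmin : IsLocalMin φ 0 := by
    have hδ : (0 : ℝ) < Real.pi / (2 * ρ) := by positivity
    filter_upwards [Ioo_mem_nhds (neg_neg_iff_pos.mpr hδ) hδ] with ε hε
    have hφ0 : φ 0 = 0 := by simp only [φ, add_zero, sub_zero, mul_zero, Real.cos_zero]; ring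
    rw [hφ0, sub_nonneg]
    rcases lt_trichotomy ε 0 with hneg | rfl | hpos
    · have := htc.two_mul_cos_mul_le hρ (neg_pos.mpr hneg) (by linarith [hε.1]) θ
      rwa [mul_neg, Real.cos_neg, sub_neg_eq_add, ← sub_eq_add_neg, add_comm] at this
    · simp [two_mul]
    · exact htc.two_mul_cos_mul_le hρ hpos hε.2 θ
  have hcont : Continuous φ := by fun_prop
  have := hmin.deriv_deriv_nonneg hcont.continuousAt
  rw [hφ''.deriv] at this
  linarith

theorem ConvexOn.deriv_deriv_nonneg {s : Set ℝ} {f : ℝ → ℝ} {x : ℝ} (hf : ConvexOn ℝ s f)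
    (hs : IsOpen s) (hd : DifferentiableOn ℝ f s) (hx : x ∈ s) : 0 ≤ deriv (deriv f) x := by
  have hmono := hf.monotoneOn_deriv fun y hy => hd.differentiableAt (hs.mem_nhds hy)
  simpa [derivWithin_of_isOpen hs hx] using hmono.derivWithin_nonneg (x := x)

theorem ConvexOn.le_mul_deriv {f : ℝ → ℝ} {x : ℝ} (hf : ConvexOn ℝ (Ici 0) f) (hf0 : f 0 = 0)
    (hx : 0 < x) (hd : DifferentiableAt ℝ f x) : f x ≤ x * deriv f x := by
  have := hf.slope_le_deriv (mem_Ici.mpr le_rfl) hx.le hx hd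
  rwa [slope_def_field, hf0, sub_zero, sub_zero, div_le_iff₀ hx, mul_comm] at this

theorem hasDerivAt_comp_one_sub_div_self {f : ℝ → ℝ} {s : ℝ} (hs : s ≠ 0)
    (hf : DifferentiableAt ℝ f ((1 - s) / s)) :
    HasDerivAt (fun t => f ((1 - t) / t)) (-deriv f ((1 - s) / s) / s ^ 2) s := by
  have hw : HasDerivAt (fun t : ℝ => (1 - t) / t) (-1 / s ^ 2) s := by
    refine (((hasDerivAt_id s).const_sub 1).div (hasDerivAt_id s) hs).congr_deriv ?_
    simp only [id]; ring
  refine (HasDerivAt.comp (h := fun t : ℝ => (1 - t) / t) s hf.hasDerivAt hw).congr_deriv ?_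
  ring

def polarLap (U : ℝ → ℝ → ℝ) (r θ : ℝ) : ℝ :=
  deriv (deriv fun s => U s θ) r + (1 / r) * deriv (fun s => U s θ) r +
    (1 / r ^ 2) * deriv (deriv fun t => U r t) θ

theorem polarLap_congr {U V : ℝ → ℝ → ℝ} {r θ : ℝ}
    (hr : (fun s => U s θ) =ᶠ[𝓝 r] fun s => V s θ)
    (hθ : (fun t => U r t) =ᶠ[𝓝 θ] fun t => V r t) : polarLap U r θ = polarLap V r θ := by
  rw [polarLap, polarLap, hr.deriv_eq, hr.deriv.deriv_eq, hθ.deriv.deriv_eq]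

theorem polarLap_comp_one_sub_div_self_mul {g h : ℝ → ℝ} (hg : ContDiffOn ℝ 2 g (Ioi 0))
    (hh : ContDiff ℝ 2 h) {r : ℝ} (hr : r ∈ Ioo 0 1) (θ : ℝ) :
    polarLap (fun s t => g ((1 - s) / s) * h t) r θ =
      (deriv (deriv g) (1 / r - 1) / r ^ 4 + deriv g (1 / r - 1) / r ^ 3) * h θ +
        (1 / r ^ 2) * g (1 / r - 1) * deriv (deriv h) θ := by
  have hr0 : r ≠ 0 := hr.1.ne'
  have hpos : ∀ s ∈ Ioo (0 : ℝ) 1, (1 - s) / s ∈ Ioi 0 := fun s hs =>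
    div_pos (sub_pos.mpr hs.2) hs.1
  have hg' : ContDiffOn ℝ 1 (deriv g) (Ioi 0) := hg.deriv_of_isOpen isOpen_Ioi (by norm_num)
  have hradial : ∀ s ∈ Ioo (0 : ℝ) 1, HasDerivAt (fun t => g ((1 - t) / t) * h θ)
      (-deriv g ((1 - s) / s) / s ^ 2 * h θ) s := fun s hs =>
    (hasDerivAt_comp_one_sub_div_self hs.1.ne' ((hg.differentiableOn two_ne_zero)
      |>.differentiableAt (isOpen_Ioi.mem_nhds (hpos s hs)))).mul_const _
  have hradial' : HasDerivAt (fun s => -deriv g ((1 - s) / s) / s ^ 2 * h θ)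
      ((deriv (deriv g) ((1 - r) / r) / r ^ 4 + 2 * deriv g ((1 - r) / r) / r ^ 3) * h θ) r := by
    refine (((hasDerivAt_comp_one_sub_div_self hr0 ((hg'.differentiableOn one_ne_zero)
      |>.differentiableAt (isOpen_Ioi.mem_nhds (hpos r hr)))).neg.div
      (hasDerivAt_pow 2 r) (pow_ne_zero 2 hr0)).mul_const (h θ)).congr_deriv ?_
    rw [Pi.neg_apply]
    field_simp
    ring
  have hh' : Differentiable ℝ h := hh.differentiable two_ne_zero
  have hh'' : Differentiable ℝ (deriv h) :=
    ((contDiff_succ_iff_deriv (n := 1)).mp hh).2.2.differentiable one_ne_zero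
  have hangular : deriv (fun t => g ((1 - r) / r) * h t) =
      fun t => g ((1 - r) / r) * deriv h t := funext fun t => deriv_const_mul _ (hh' t)
  have hderiv_eq : deriv (fun s => g ((1 - s) / s) * h θ) =ᶠ[𝓝 r]
      fun s => -deriv g ((1 - s) / s) / s ^ 2 * h θ :=
    eventually_of_mem (Ioo_mem_nhds hr.1 hr.2) fun s hs => (hradial s hs).deriv
  rw [polarLap, (hradial r hr).deriv, hderiv_eq.deriv_eq, hradial'.deriv, hangular,
    deriv_const_mul _ (hh'' θ), div_sub_one hr0]
  field_simp
  ring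

theorem le_polarLap_comp_one_sub_div_self_mul {ρ : ℝ} {g h : ℝ → ℝ} (hρ : 0 < ρ)
    (hpos : ∀ θ, 0 ≤ h θ) (htc : TrigConvex ρ h) (hh : ContDiff ℝ 2 h)
    (hconv : ConvexOn ℝ (Ici 0) g) (hgpos : ∀ x, 0 ≤ x → 0 ≤ g x) (hg0 : g 0 = 0)
    (hg : ContDiffOn ℝ 2 g (Ioi 0)) {r : ℝ} (hr : r ∈ Ioo 0 1) (θ : ℝ) :
    (1 / r ^ 2) * (1 / (1 - r) - ρ ^ 2) * g ((1 - r) / r) * h θ ≤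
      polarLap (fun s t => g ((1 - s) / s) * h t) r θ := by
  obtain ⟨hr0, hr1⟩ := hr
  rw [polarLap_comp_one_sub_div_self_mul hg hh ⟨hr0, hr1⟩, div_sub_one hr0.ne']
  set x := (1 - r) / r
  have hx : 0 < x := div_pos (sub_pos.mpr hr1) hr0
  have hgd : DifferentiableAt ℝ g x :=
    (hg.differentiableOn two_ne_zero).differentiableAt (isOpen_Ioi.mem_nhds hx)
  have hslope : g x / (1 - r) ≤ deriv g x / r := by
    rw [div_le_div_iff₀ (sub_pos.mpr hr1) hr0]
    have := hconv.le_mul_deriv hg0 hx hgd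
    calc g x * r ≤ x * deriv g x * r := by gcongr
      _ = deriv g x * (1 - r) := by simp only [x]; field_simp
  have hconvex : 0 ≤ deriv (deriv g) x :=
    (hconv.subset Ioi_subset_Ici_self (convex_Ioi 0)).deriv_deriv_nonneg isOpen_Ioi
      (hg.differentiableOn two_ne_zero) hx
  have htrig := htc.deriv_deriv_add_sq_mul_nonneg hρ hh θ
  have hA := hpos θ
  have hG := hgpos x hx.le
  calc (1 / r ^ 2) * (1 / (1 - r) - ρ ^ 2) * g x * h θ
      = (g x / (1 - r) * h θ - g x * (ρ ^ 2 * h θ)) / r ^ 2 := by field_simp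
    _ ≤ (deriv g x / r * h θ + g x * deriv (deriv h) θ) / r ^ 2 := by
        gcongr
        nlinarith [mul_le_mul_of_nonneg_right hslope hA]
    _ ≤ (deriv (deriv g) x / r ^ 4 + deriv g x / r ^ 3) * h θ +
        1 / r ^ 2 * g x * deriv (deriv h) θ := by
        have : 0 ≤ deriv (deriv g) x / r ^ 4 * h θ := by positivity
        rw [show deriv g x / r ^ 3 = deriv g x / r / r ^ 2 by field_simp]
        field_simp
        nlinarith

theorem Function.Periodic.apply_eq_of_coe_angle_eq {α : Type*} {h : ℝ → α}
    (hper : Function.Periodic h (2 * Real.pi)) {a b : ℝ} (hab : (a : Real.Angle) = b) :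
    h a = h b := by
  obtain ⟨k, hk⟩ := Real.Angle.angle_eq_iff_two_pi_dvd_sub.mp hab
  rw [sub_eq_iff_eq_add.mp hk, add_comm, mul_comm]
  exact hper.int_mul k b

theorem Function.Periodic.apply_arg_circleMap_zero {α : Type*} {h : ℝ → α}
    (hper : Function.Periodic h (2 * Real.pi)) {r : ℝ} (hr : 0 < r) (t : ℝ) :
    h (arg (circleMap 0 r t)) = h t := by
  refine hper.apply_eq_of_coe_angle_eq ?_
  rw [circleMap_zero, arg_real_mul _ hr, arg_exp_mul_I, Real.Angle.coe_toIocMod]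

theorem Function.Periodic.contDiffAt_comp_arg {h : ℝ → ℝ} {n : WithTop ℕ∞}
    (hper : Function.Periodic h (2 * Real.pi)) (hh : ContDiff ℝ n h) {z : ℂ} (hz : z ≠ 0) :
    ContDiffAt ℝ n (fun w => h (arg w)) z := by
  have hlog : ContDiffAt ℝ n (fun w => (log (w / z)).im + arg z) z := by
    have hslit : z / z ∈ slitPlane := by rw [div_self hz]; exact one_mem_slitPlane
    have hdiv : ContDiffAt ℝ n (fun w : ℂ => w / z) z := contDiffAt_id.div_const z
    have hl : ContDiffAt ℝ n log (z / z) := (contDiffAt_log hslit).restrict_scalars ℝ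
    exact (imCLM.contDiff.contDiffAt.comp z (hl.comp (f := fun w : ℂ => w / z) z hdiv)).add
      contDiffAt_const
  refine (hh.contDiffAt.comp z hlog).congr_of_eventuallyEq ?_
  filter_upwards [isOpen_ne.mem_nhds hz] with w hw
  refine hper.apply_eq_of_coe_angle_eq ?_
  dsimp only
  rw [log_im, Real.Angle.coe_add, arg_div_coe_angle hw hz, sub_add_cancel]

section Polar

variable {F : Type*} [NormedAddCommGroup F] [NormedSpace ℝ F] {u : ℂ → F} {c : ℂ} {r θ : ℝ}

theorem hasDerivAt_circleMap_radius (c : ℂ) (r θ : ℝ) :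
    HasDerivAt (fun s => circleMap c s θ) (cexp (θ * I)) r := by
  simpa [circleMap] using ((hasDerivAt_id (r : ℝ)).ofReal_comp.mul_const (cexp (θ * I))).const_add c

theorem DifferentiableAt.hasDerivAt_comp_circleMap_radius
    (hu : DifferentiableAt ℝ u (circleMap c r θ)) :
    HasDerivAt (fun s => u (circleMap c s θ)) (fderiv ℝ u (circleMap c r θ) (cexp (θ * I))) r :=
  hu.hasFDerivAt.comp_hasDerivAt r (hasDerivAt_circleMap_radius c r θ)

theorem DifferentiableAt.hasDerivAt_comp_circleMap (hu : DifferentiableAt ℝ u (circleMap c r θ)) :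
    HasDerivAt (fun t => u (circleMap c r t))
      (r • fderiv ℝ u (circleMap c r θ) (I * cexp (θ * I))) θ := by
  have hγ : circleMap 0 r θ * I = r • (I * cexp (θ * I)) := by
    rw [circleMap_zero, real_smul]; ring
  have := hu.hasFDerivAt.comp_hasDerivAt θ (hasDerivAt_circleMap c r θ)
  rwa [hγ, map_smul] at this

theorem DifferentiableAt.hasDerivAt_fderiv_comp_circleMap_radius
    (hu : DifferentiableAt ℝ (fderiv ℝ u) (circleMap c r θ)) :
    HasDerivAt (fun s => fderiv ℝ u (circleMap c s θ) (cexp (θ * I)))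
      (fderiv ℝ (fderiv ℝ u) (circleMap c r θ) (cexp (θ * I)) (cexp (θ * I))) r := by
  simpa using hu.hasDerivAt_comp_circleMap_radius.clm_apply (hasDerivAt_const r (cexp (θ * I)))

theorem DifferentiableAt.hasDerivAt_fderiv_comp_circleMap
    (hu : DifferentiableAt ℝ (fderiv ℝ u) (circleMap c r θ)) :
    HasDerivAt (fun t => fderiv ℝ u (circleMap c r t) (I * cexp (t * I)))
      (r • fderiv ℝ (fderiv ℝ u) (circleMap c r θ) (I * cexp (θ * I)) (I * cexp (θ * I)) -
        fderiv ℝ u (circleMap c r θ) (cexp (θ * I))) θ := by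
  have hrot : HasDerivAt (fun t : ℝ => I * cexp (t * I)) (-cexp (θ * I)) θ := by
    have := ((hasDerivAt_id (θ : ℝ)).ofReal_comp.mul_const I).cexp.const_mul I
    refine this.congr_deriv ?_
    simp only [id, ofReal_one, one_mul]
    linear_combination cexp (θ * I) * I_sq
  refine (hu.hasDerivAt_comp_circleMap.clm_apply hrot).congr_deriv ?_
  simp [sub_eq_add_neg]

theorem ContinuousLinearMap.apply_exp_add_apply_I_mul_exp (H : ℂ →L[ℝ] ℂ →L[ℝ] F) (θ : ℝ) :
    H (cexp (θ * I)) (cexp (θ * I)) + H (I * cexp (θ * I)) (I * cexp (θ * I)) = H 1 1 + H I I := by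
  have he : cexp (θ * I) = Real.cos θ • (1 : ℂ) + Real.sin θ • I := by
    rw [exp_mul_I, ← ofReal_cos, ← ofReal_sin]; simp [real_smul]
  have hie : I * cexp (θ * I) = (-Real.sin θ) • (1 : ℂ) + Real.cos θ • I := by
    rw [he]; simp only [real_smul, ofReal_neg]; linear_combination (Real.sin θ : ℂ) * I_sq
  rw [hie, he]
  simp only [map_add, map_smul, add_apply, smul_apply]
  linear_combination (norm := module) (Real.sin_sq_add_cos_sq θ) • (H 1 1 + H I I)

end Polar

theorem lap_eq_fderiv_fderiv {u : ℂ → ℝ} {z : ℂ} (hu : DifferentiableAt ℝ (fderiv ℝ u) z) :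
    lap u z = fderiv ℝ (fderiv ℝ u) z 1 1 + fderiv ℝ (fderiv ℝ u) z I I := by
  simp [lap, fderiv_clm_apply hu (differentiableAt_const _)]

theorem lap_eq_fderiv_fderiv_exp {u : ℂ → ℝ} {z : ℂ} (hu : DifferentiableAt ℝ (fderiv ℝ u) z)
    (θ : ℝ) : lap u z = fderiv ℝ (fderiv ℝ u) z (cexp (θ * I)) (cexp (θ * I)) +
      fderiv ℝ (fderiv ℝ u) z (I * cexp (θ * I)) (I * cexp (θ * I)) := by
  rw [lap_eq_fderiv_fderiv hu, ContinuousLinearMap.apply_exp_add_apply_I_mul_exp]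

theorem lap_circleMap_eq_polarLap {u : ℂ → ℝ} {c : ℂ} {r θ : ℝ}
    (hu : ContDiffAt ℝ 2 u (circleMap c r θ)) (hr : r ≠ 0) :
    lap u (circleMap c r θ) = polarLap (fun s t => u (circleMap c s t)) r θ := by
  set z := circleMap c r θ
  have hH : DifferentiableAt ℝ (fderiv ℝ u) z :=
    (hu.fderiv_right (m := 1) (by norm_num)).differentiableAt one_ne_zero
  have hdiff : ∀ᶠ w in 𝓝 z, DifferentiableAt ℝ u w :=
    (hu.eventually (by simp)).mono fun w hw => hw.differentiableAt two_ne_zero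
  have hradial : deriv (fun s => u (circleMap c s θ)) =ᶠ[𝓝 r]
      fun s => fderiv ℝ u (circleMap c s θ) (cexp (θ * I)) := by
    filter_upwards [(hasDerivAt_circleMap_radius c r θ).continuousAt.eventually hdiff] with s hs
    exact hs.hasDerivAt_comp_circleMap_radius.deriv
  have hangular : deriv (fun t => u (circleMap c r t)) =ᶠ[𝓝 θ]
      fun t => r * fderiv ℝ u (circleMap c r t) (I * cexp (t * I)) := by
    filter_upwards [(hasDerivAt_circleMap c r θ).continuousAt.eventually hdiff] with t ht
    exact ht.hasDerivAt_comp_circleMap.deriv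
  rw [polarLap, hradial.deriv_eq, hradial.eq_of_nhds, hangular.deriv_eq,
    hH.hasDerivAt_fderiv_comp_circleMap_radius.deriv,
    (hH.hasDerivAt_fderiv_comp_circleMap.const_mul r).deriv, lap_eq_fderiv_fderiv_exp hH θ]
  field_simp
  simp only [smul_eq_mul]
  ring

theorem hasDerivAt_intervalIntegral_of_continuousOn {E : Type*} [NormedAddCommGroup E]
    [NormedSpace ℝ E] {F F' : ℝ → ℝ → E} {s : Set ℝ} {x₀ a b : ℝ} (hs : s ∈ 𝓝 x₀)
    (hsc : IsCompact s) (hF : ∀ x ∈ s, ContinuousOn (F x) (uIcc a b))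
    (hF' : ContinuousOn (Function.uncurry F') (s ×ˢ uIcc a b))
    (hderiv : ∀ x ∈ s, ∀ t ∈ uIcc a b, HasDerivAt (F · t) (F' x t) x) :
    HasDerivAt (fun x => ∫ t in a..b, F x t) (∫ t in a..b, F' x₀ t) x₀ := by
  obtain ⟨M, hM⟩ := (hsc.prod isCompact_uIcc).exists_bound_of_continuousOn hF'
  have hx₀ := mem_of_mem_nhds hs
  have hF'x₀ : ContinuousOn (F' x₀) (uIcc a b) :=
    hF'.comp (continuous_const.prodMk continuous_id).continuousOn fun t ht => ⟨hx₀, ht⟩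
  refine (intervalIntegral.hasDerivAt_integral_of_dominated_loc_of_deriv_le (bound := fun _ => M)
    hs ?_ (hF x₀ hx₀).intervalIntegrable
    ((hF'x₀.mono uIoc_subset_uIcc).aestronglyMeasurable measurableSet_uIoc)
    (ae_of_all _ fun t ht x hx => hM (x, t) ⟨hx, uIoc_subset_uIcc ht⟩) intervalIntegrable_const
    (ae_of_all _ fun t ht x hx => hderiv x hx t (uIoc_subset_uIcc ht))).2
  exact eventually_of_mem hs fun x hx =>
    ((hF x hx).mono uIoc_subset_uIcc).aestronglyMeasurable measurableSet_uIoc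

theorem monotoneOn_of_mul_deriv_deriv_add_deriv_nonneg {A A' A'' : ℝ → ℝ} {R : ℝ}
    (hA : ∀ x ∈ Icc 0 R, HasDerivAt A (A' x) x) (hA' : ∀ x ∈ Icc 0 R, HasDerivAt A' (A'' x) x)
    (hlap : ∀ x ∈ Ioo 0 R, 0 ≤ x * A'' x + A' x) : MonotoneOn A (Icc 0 R) := by
  have hmul : ∀ x ∈ Icc 0 R, HasDerivAt (fun x => x * A' x) (x * A'' x + A' x) x := fun x hx =>
    ((hasDerivAt_id x).mul (hA' x hx)).congr_deriv (by simp only [id]; ring)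
  have hmono : MonotoneOn (fun x => x * A' x) (Icc 0 R) :=
    monotoneOn_of_hasDerivWithinAt_nonneg (convex_Icc 0 R)
      (fun x hx => (hmul x hx).continuousAt.continuousWithinAt)
      (fun x hx => (hmul x (interior_subset hx)).hasDerivWithinAt)
      (fun x hx => hlap x (by rwa [interior_Icc] at hx))
  refine monotoneOn_of_hasDerivWithinAt_nonneg (convex_Icc 0 R)
    (fun x hx => (hA x hx).continuousAt.continuousWithinAt)
    (fun x hx => (hA x (interior_subset hx)).hasDerivWithinAt) fun x hx => ?_
  rw [interior_Icc] at hx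
  have := hmono ⟨le_rfl, hx.1.le.trans hx.2.le⟩ (Ioo_subset_Icc_self hx) hx.1.le
  simp only [zero_mul] at this
  exact nonneg_of_mul_nonneg_right this hx.1

section CircleMean

variable {u : ℂ → ℝ} {U : Set ℂ} {c : ℂ} {R : ℝ}

theorem circleMap_mem_of_closedBall_subset (hR : closedBall c R ⊆ U) {x : ℝ}
    (hx : x ∈ Icc (-R) R) (t : ℝ) : circleMap c x t ∈ U :=
  hR (by rw [mem_closedBall, dist_eq_norm, circleMap_sub_center, norm_circleMap_zero]
         exact abs_le.mpr hx)

theorem ContinuousOn.comp_circleMap_uncurry {G : Type*} [TopologicalSpace G] {Φ : ℂ → G}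
    (hΦ : ContinuousOn Φ U) (hR : closedBall c R ⊆ U) :
    ContinuousOn (fun p : ℝ × ℝ => Φ (circleMap c p.1 p.2)) (Icc (-R) R ×ˢ univ) :=
  hΦ.comp (Real.circleMap.continuous (c := c)).continuousOn fun p hp =>
    circleMap_mem_of_closedBall_subset hR hp.1 p.2

theorem hasDerivAt_integral_comp_circleMap (hU : IsOpen U) (hu : ContDiffOn ℝ 2 u U)
    (hR : closedBall c R ⊆ U) {x : ℝ} (hx : x ∈ Ioo (-R) R) :
    HasDerivAt (fun x => ∫ t in (0)..2 * Real.pi, u (circleMap c x t))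
      (∫ t in (0)..2 * Real.pi, fderiv ℝ u (circleMap c x t) (cexp (t * I))) x := by
  have hdiff := hu.differentiableOn two_ne_zero
  have hDu : ContinuousOn (fderiv ℝ u) U := hu.continuousOn_fderiv_of_isOpen hU (by norm_num)
  refine hasDerivAt_intervalIntegral_of_continuousOn (Icc_mem_nhds hx.1 hx.2) isCompact_Icc
    (fun x hx => (hu.continuousOn.comp_continuous (continuous_circleMap c x)
      (circleMap_mem_of_closedBall_subset hR hx)).continuousOn) ?_
    fun x hx t _ => ((hdiff _ (circleMap_mem_of_closedBall_subset hR hx t)).differentiableAt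
      (hU.mem_nhds (circleMap_mem_of_closedBall_subset hR hx t))).hasDerivAt_comp_circleMap_radius
  exact ((hDu.comp_circleMap_uncurry hR).clm_apply
    (by fun_prop : Continuous fun p : ℝ × ℝ => cexp (p.2 * I)).continuousOn).mono
    (prod_mono subset_rfl (subset_univ _))

theorem hasDerivAt_integral_fderiv_comp_circleMap (hU : IsOpen U) (hu : ContDiffOn ℝ 2 u U)
    (hR : closedBall c R ⊆ U) {x : ℝ} (hx : x ∈ Ioo (-R) R) :
    HasDerivAt (fun x => ∫ t in (0)..2 * Real.pi, fderiv ℝ u (circleMap c x t) (cexp (t * I)))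
      (∫ t in (0)..2 * Real.pi,
        fderiv ℝ (fderiv ℝ u) (circleMap c x t) (cexp (t * I)) (cexp (t * I))) x := by
  have hu' : ContDiffOn ℝ 1 (fderiv ℝ u) U := hu.fderiv_of_isOpen hU (by norm_num)
  have hD2u : ContinuousOn (fderiv ℝ (fderiv ℝ u)) U :=
    hu'.continuousOn_fderiv_of_isOpen hU le_rfl
  have he : Continuous fun p : ℝ × ℝ => cexp (p.2 * I) := by fun_prop
  refine hasDerivAt_intervalIntegral_of_continuousOn (Icc_mem_nhds hx.1 hx.2) isCompact_Icc
    (fun x hx => ((hu'.continuousOn.comp_continuous (continuous_circleMap c x)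
      (circleMap_mem_of_closedBall_subset hR hx)).clm_apply (by fun_prop)).continuousOn) ?_
    fun x hx t _ => (((hu'.differentiableOn one_ne_zero) _
      (circleMap_mem_of_closedBall_subset hR hx t)).differentiableAt
      (hU.mem_nhds (circleMap_mem_of_closedBall_subset hR hx t)))
      |>.hasDerivAt_fderiv_comp_circleMap_radius
  exact (((hD2u.comp_circleMap_uncurry hR).clm_apply he.continuousOn).clm_apply
    he.continuousOn).mono (prod_mono subset_rfl (subset_univ _))

theorem mul_integral_lap_comp_circleMap (hU : IsOpen U) (hu : ContDiffOn ℝ 2 u U)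
    (hR : closedBall c R ⊆ U) {x : ℝ} (hx : x ∈ Icc (-R) R) :
    x * ∫ t in (0)..2 * Real.pi, lap u (circleMap c x t) =
      x * (∫ t in (0)..2 * Real.pi,
        fderiv ℝ (fderiv ℝ u) (circleMap c x t) (cexp (t * I)) (cexp (t * I))) +
      ∫ t in (0)..2 * Real.pi, fderiv ℝ u (circleMap c x t) (cexp (t * I)) := by
  have hmem := circleMap_mem_of_closedBall_subset hR hx
  have hu' : ContDiffOn ℝ 1 (fderiv ℝ u) U := hu.fderiv_of_isOpen hU (by norm_num)
  have hH : ∀ t, DifferentiableAt ℝ (fderiv ℝ u) (circleMap c x t) := fun t =>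
    (hu'.differentiableOn one_ne_zero _ (hmem t)).differentiableAt (hU.mem_nhds (hmem t))
  have hDu : Continuous fun t => fderiv ℝ u (circleMap c x t) :=
    (hu.continuousOn_fderiv_of_isOpen hU (by norm_num)).comp_continuous
      (continuous_circleMap c x) hmem
  have hD2u : Continuous fun t => fderiv ℝ (fderiv ℝ u) (circleMap c x t) :=
    (hu'.continuousOn_fderiv_of_isOpen hU le_rfl).comp_continuous (continuous_circleMap c x) hmem
  set Φ' : ℝ → ℝ := fun t => x • fderiv ℝ (fderiv ℝ u) (circleMap c x t) (I * cexp (t * I))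
    (I * cexp (t * I)) - fderiv ℝ u (circleMap c x t) (cexp (t * I))
  have hΦ' : Continuous Φ' := by fun_prop
  have hperiod : ∫ t in (0)..2 * Real.pi, Φ' t = 0 := by
    rw [intervalIntegral.integral_eq_sub_of_hasDerivAt
      (fun t _ => (hH t).hasDerivAt_fderiv_comp_circleMap) (hΦ'.intervalIntegrable _ _)]
    have h2π : cexp (↑(2 * Real.pi) * I) = cexp (↑(0 : ℝ) * I) := by
      push_cast; rw [exp_two_pi_mul_I, zero_mul, exp_zero]
    rw [sub_eq_zero]
    simpa [h2π] using congrArg (fun z => fderiv ℝ u z (I * cexp (↑(0 : ℝ) * I)))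
      (periodic_circleMap c x 0)
  have hpoint : ∀ t, x * lap u (circleMap c x t) =
      x * fderiv ℝ (fderiv ℝ u) (circleMap c x t) (cexp (t * I)) (cexp (t * I)) +
        fderiv ℝ u (circleMap c x t) (cexp (t * I)) + Φ' t := fun t => by
    rw [lap_eq_fderiv_fderiv_exp (hH t) t]; simp only [Φ', smul_eq_mul]; ring
  rw [← intervalIntegral.integral_const_mul, intervalIntegral.integral_congr fun t _ => hpoint t,
    intervalIntegral.integral_add, intervalIntegral.integral_add, hperiod, add_zero,
    intervalIntegral.integral_const_mul]
  all_goals exact Continuous.intervalIntegrable (by fun_prop) _ _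

end CircleMean

theorem subharmonicOn_of_lap_nonneg {u : ℂ → ℝ} {U : Set ℂ} (hU : IsOpen U)
    (hu : ContDiffOn ℝ 2 u U) (hlap : ∀ z ∈ U, 0 ≤ lap u z) : SubharmonicOn u U := by
  refine ⟨hu.continuousOn.upperSemicontinuousOn, fun c _ R hR hball => ?_⟩
  obtain ⟨δ, hδ, hδU⟩ := (isCompact_closedBall c R).exists_cthickening_subset_open hU hball
  have hball' : closedBall c (R + δ) ⊆ U := by
    rwa [add_comm, ← cthickening_closedBall hδ.le hR.le]
  have hIoo : ∀ x ∈ Icc 0 R, x ∈ Ioo (-(R + δ)) (R + δ) := fun x hx =>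
    ⟨by linarith [hx.1], by linarith [hx.2]⟩
  have hmono : MonotoneOn (fun x => ∫ t in (0)..2 * Real.pi, u (circleMap c x t)) (Icc 0 R) :=
    monotoneOn_of_mul_deriv_deriv_add_deriv_nonneg
      (fun x hx => hasDerivAt_integral_comp_circleMap hU hu hball' (hIoo x hx))
      (fun x hx => hasDerivAt_integral_fderiv_comp_circleMap hU hu hball' (hIoo x hx))
      fun x hx => by
        have hx' := Ioo_subset_Icc_self (hIoo x (Ioo_subset_Icc_self hx))
        rw [← mul_integral_lap_comp_circleMap hU hu hball' hx']
        exact mul_nonneg hx.1.le (intervalIntegral.integral_nonneg Real.two_pi_pos.le fun t _ =>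
          hlap _ (circleMap_mem_of_closedBall_subset hball' hx' t))
  have := hmono ⟨le_rfl, hR.le⟩ ⟨hR.le, le_rfl⟩ hR.le
  simp only [circleMap_zero_radius, Function.const_apply, intervalIntegral.integral_const,
    sub_zero, smul_eq_mul] at this
  rwa [le_inv_mul_iff₀ Real.two_pi_pos]

section Model

variable {g h : ℝ → ℝ}

theorem contDiffOn_comp_one_sub_div_norm_mul_comp_arg (hper : Function.Periodic h (2 * Real.pi))
    (hh : ContDiff ℝ 2 h) (hg : ContDiffOn ℝ 2 g (Ioi 0)) :
    ContDiffOn ℝ 2 (fun z : ℂ => g ((1 - ‖z‖) / ‖z‖) * h (arg z)) {z | 0 < ‖z‖ ∧ ‖z‖ < 1} := by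
  intro z ⟨hz0, hz1⟩
  have hz : z ≠ 0 := norm_pos_iff.mp hz0
  have hnorm : ContDiffAt ℝ 2 (fun w : ℂ => ‖w‖) z := contDiffAt_norm ℝ hz
  have hratio : ContDiffAt ℝ 2 (fun w : ℂ => (1 - ‖w‖) / ‖w‖) z :=
    (contDiffAt_const.sub hnorm).div hnorm hz0.ne'
  have hgz : ContDiffAt ℝ 2 g ((1 - ‖z‖) / ‖z‖) :=
    hg.contDiffAt (isOpen_Ioi.mem_nhds (div_pos (sub_pos.mpr hz1) hz0))
  exact ((hgz.comp z hratio).mul (hper.contDiffAt_comp_arg hh hz)).contDiffWithinAt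

theorem lap_comp_one_sub_div_norm_mul_comp_arg (hper : Function.Periodic h (2 * Real.pi))
    (hh : ContDiff ℝ 2 h) (hg : ContDiffOn ℝ 2 g (Ioi 0)) {z : ℂ} (hz : 0 < ‖z‖ ∧ ‖z‖ < 1) :
    lap (fun z : ℂ => g ((1 - ‖z‖) / ‖z‖) * h (arg z)) z =
      polarLap (fun s t => g ((1 - s) / s) * h t) ‖z‖ (arg z) := by
  have hpolar : ∀ s, 0 < s → ∀ t, g ((1 - ‖circleMap 0 s t‖) / ‖circleMap 0 s t‖) *
      h (arg (circleMap 0 s t)) = g ((1 - s) / s) * h t := fun s hs t => by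
    rw [norm_circleMap_zero, abs_of_pos hs, hper.apply_arg_circleMap_zero hs]
  have hopen : IsOpen {z : ℂ | 0 < ‖z‖ ∧ ‖z‖ < 1} :=
    (isOpen_lt continuous_const continuous_norm).inter (isOpen_lt continuous_norm continuous_const)
  have hz' : circleMap 0 ‖z‖ (arg z) = z := by
    rw [circleMap_zero]; exact norm_mul_exp_arg_mul_I z
  have hv : ContDiffAt ℝ 2 (fun z : ℂ => g ((1 - ‖z‖) / ‖z‖) * h (arg z))
      (circleMap 0 ‖z‖ (arg z)) := by
    rw [hz']
    exact (contDiffOn_comp_one_sub_div_norm_mul_comp_arg hper hh hg).contDiffAt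
      (hopen.mem_nhds hz)
  conv_lhs => rw [← hz']
  rw [lap_circleMap_eq_polarLap hv hz.1.ne']
  exact polarLap_congr (eventually_of_mem (Ioi_mem_nhds hz.1) fun s hs => hpolar s hs _)
    (Eventually.of_forall fun t => hpolar _ hz.1 t)

end Model

/-- For `ρ > 0`, a nonnegative `2π`-periodic `ρ`-trigonometrically convex
`h` of class `C²`, and a convex `g : ℝ⁺ → ℝ⁺` with `g 0 = 0` of class `C²` on `(0,∞)`,
the polar Laplacian `Δv = ∂²v/∂r² + (1/r)∂v/∂r + (1/r²)∂²v/∂θ²` of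
`v(re^{iθ}) = g((1-r)/r) h(θ)` equals
`(g''(1/r-1)/r⁴ + g'(1/r-1)/r³) h(θ) + (1/r²) g(1/r-1) h''(θ)`, is bounded below by
`(1/r²)(1/(1-r) - ρ²) g((1-r)/r) h(θ)`, and consequently `v` is subharmonic on the
annulus `{max {1/2, 1-1/ρ²} < |z| < 1}`. -/
theorem polar_laplacian_formula (ρ : ℝ) (hρ : 0 < ρ)
    (h : ℝ → ℝ) (hper : Function.Periodic h (2 * Real.pi)) (hpos : ∀ θ, 0 ≤ h θ)
    (htc : TrigConvex ρ h) (hC2 : ContDiff ℝ 2 h)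
    (g : ℝ → ℝ) (hconv : ConvexOn ℝ (Set.Ici (0 : ℝ)) g) (hgpos : ∀ x, 0 ≤ x → 0 ≤ g x)
    (hg0 : g 0 = 0) (hgC2 : ContDiffOn ℝ 2 g (Set.Ioi (0 : ℝ))) :
    (∀ r ∈ Set.Ioo (0 : ℝ) 1, ∀ θ : ℝ,
      deriv (deriv (fun s : ℝ => g ((1 - s) / s) * h θ)) r +
          (1 / r) * deriv (fun s : ℝ => g ((1 - s) / s) * h θ) r +
          (1 / r ^ 2) * deriv (deriv (fun t : ℝ => g ((1 - r) / r) * h t)) θ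
        = (deriv (deriv g) (1 / r - 1) / r ^ 4 + deriv g (1 / r - 1) / r ^ 3) * h θ +
            (1 / r ^ 2) * g (1 / r - 1) * deriv (deriv h) θ) ∧
    (∀ r ∈ Set.Ioo (0 : ℝ) 1, ∀ θ : ℝ,
      (1 / r ^ 2) * (1 / (1 - r) - ρ ^ 2) * g ((1 - r) / r) * h θ
        ≤ deriv (deriv (fun s : ℝ => g ((1 - s) / s) * h θ)) r +
            (1 / r) * deriv (fun s : ℝ => g ((1 - s) / s) * h θ) r +
            (1 / r ^ 2) * deriv (deriv (fun t : ℝ => g ((1 - r) / r) * h t)) θ) ∧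
    SubharmonicOn (fun z : ℂ => g ((1 - ‖z‖) / ‖z‖) * h (Complex.arg z))
      {z : ℂ | max (1/2) (1 - 1/ρ^2) < ‖z‖ ∧ ‖z‖ < 1} := by
  have hannulus : IsOpen {z : ℂ | max (1/2) (1 - 1/ρ^2) < ‖z‖ ∧ ‖z‖ < 1} :=
    (isOpen_lt continuous_const continuous_norm).inter (isOpen_lt continuous_norm continuous_const)
  have hpunctured : {z : ℂ | max (1/2) (1 - 1/ρ^2) < ‖z‖ ∧ ‖z‖ < 1} ⊆
      {z | 0 < ‖z‖ ∧ ‖z‖ < 1} := fun z hz =>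
    ⟨lt_of_le_of_lt (by positivity) hz.1, hz.2⟩
  refine ⟨fun r hr θ => polarLap_comp_one_sub_div_self_mul hgC2 hC2 hr θ,
    fun r hr θ => le_polarLap_comp_one_sub_div_self_mul hρ hpos htc hC2 hconv hgpos hg0 hgC2 hr θ,
    subharmonicOn_of_lap_nonneg hannulus
      ((contDiffOn_comp_one_sub_div_norm_mul_comp_arg hper hC2 hgC2).mono hpunctured)
      fun z hz => ?_⟩
  obtain ⟨hr0, hr1⟩ := hpunctured hz
  rw [lap_comp_one_sub_div_norm_mul_comp_arg hper hC2 hgC2 ⟨hr0, hr1⟩]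
  refine le_trans ?_ (le_polarLap_comp_one_sub_div_self_mul hρ hpos htc hC2 hconv hgpos hg0 hgC2
    ⟨hr0, hr1⟩ _)
  have hρr : ρ ^ 2 ≤ 1 / (1 - ‖z‖) := by
    rw [le_div_iff₀ (sub_pos.mpr hr1), ← le_div_iff₀' (by positivity)]
    linarith [le_max_right (1/2 : ℝ) (1 - 1/ρ^2), hz.1]
  have hg_nonneg := hgpos _ (div_nonneg (sub_pos.mpr hr1).le hr0.le)
  have hh_nonneg := hpos (arg z)
  have hfactor := sub_nonneg.mpr hρr
  positivity
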